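/- For every α ∈ (0,1) and ζ ∈ (0, 1−α) there exists a constant b > 0 depending only on α and ζ with the following property: for all integers d ≥ 1, m, n ≥ 2, every weight ϑ ∈ (0,1), and every Borel set A ⊆ (ℝ^d)^m × (ℝ^d)^n (a rejection region) such that (P^{⊗m} ⊗ P^{⊗n})(A) ≤ α for every Borel probability measure P on ℝ^d, there exist Borel probability measures P_X, P_Y on ℝ^d with W_d(P_X, P_Y) ≥ b·(m^{−1/2} + n^{−1/2}) and (P_X^{⊗m} ⊗ P_Y^{⊗n})(complement of A) ≥ ζ. In words: no level-α test can have worst-case type II error below ζ against alternatives separated by b·(m^{−1/2}+n^{−1/2}) in Cramér–von Mises distance, uniformly over the dimension d. -/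

import Mathlib

open MeasureTheory ProbabilityTheory Real
open scoped RealInnerProductSpace ENNReal BigOperators

noncomputable section

/-- The standard Gaussian measure on `ℝ^d = EuclideanSpace ℝ (Fin d)`. -/
def stdGaussian (d : ℕ) : Measure (EuclideanSpace ℝ (Fin d)) :=
  (Measure.pi fun _ : Fin d => gaussianReal 0 1).map
    ⇑(EuclideanSpace.equiv (Fin d) ℝ).symm

/-- The uniform (rotation-invariant) probability measure `λ` on the unit sphere
`S^{d-1} = {x : ‖x‖ = 1} ⊆ ℝ^d`, realized as a Borel measure on `ℝ^d` concentrated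
on the sphere: the pushforward of the standard Gaussian under `x ↦ ‖x‖⁻¹ • x`. -/
def sphereUniform (d : ℕ) : Measure (EuclideanSpace ℝ (Fin d)) :=
  (stdGaussian d).map fun x => ‖x‖⁻¹ • x

/-- `Ang u v = arccos (⟪u,v⟫ / (‖u‖ ‖v‖)) ∈ [0, π]`, the angle between two nonzero vectors. -/
def Ang {d : ℕ} (u v : EuclideanSpace ℝ (Fin d)) : ℝ :=
  Real.arccos (⟪u, v⟫ / (‖u‖ * ‖v‖))

/-- Law of the projection `x ↦ ⟪β, x⟫` under `P`. -/
def projLaw {d : ℕ} (P : Measure (EuclideanSpace ℝ (Fin d)))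
    (β : EuclideanSpace ℝ (Fin d)) : Measure ℝ :=
  P.map fun x => ⟪β, x⟫

/-- `F_{β,P}(t) = P {x : ⟪β,x⟫ ≤ t}`. -/
def projCDF {d : ℕ} (P : Measure (EuclideanSpace ℝ (Fin d)))
    (β : EuclideanSpace ℝ (Fin d)) (t : ℝ) : ℝ :=
  (P {x | ⟪β, x⟫ ≤ t}).toReal

/-- The squared Cramér–von Mises distance `W_d²(P,Q)` with weight `ϑ`:
`∫_{S^{d-1}} ∫_ℝ (F_{β,P}(t) - F_{β,Q}(t))² dH_β(t) dλ(β)` where `H_β` is the law of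
`x ↦ ⟪β,x⟫` under the mixture `ϑ•P + (1-ϑ)•Q`. -/
def cvmSq {d : ℕ} (ϑ : ℝ) (P Q : Measure (EuclideanSpace ℝ (Fin d))) : ℝ :=
  ∫ β, (∫ t, (projCDF P β t - projCDF Q β t) ^ 2
      ∂(projLaw (ENNReal.ofReal ϑ • P + ENNReal.ofReal (1 - ϑ) • Q) β))
    ∂(sphereUniform d)

/-- The continuity assumption: for `λ`-a.e. `β`, the pushforwards of `P` and `Q`
under `x ↦ ⟪β,x⟫` are atomless. -/
def ContinuityAssumption {d : ℕ} (P Q : Measure (EuclideanSpace ℝ (Fin d))) : Prop :=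
  ∀ᵐ β ∂(sphereUniform d),
    (∀ t : ℝ, projLaw P β {t} = 0) ∧ (∀ t : ℝ, projLaw Q β {t} = 0)

/-- The joint law `P^{⊗m} ⊗ Q^{⊗n}` of two independent i.i.d. samples of sizes `m` and `n`. -/
def sampleLaw {d : ℕ} (m n : ℕ) (P Q : Measure (EuclideanSpace ℝ (Fin d)))
    (hP : IsProbabilityMeasure P) (hQ : IsProbabilityMeasure Q) :
    Measure ((Fin m → EuclideanSpace ℝ (Fin d)) × (Fin n → EuclideanSpace ℝ (Fin d))) :=
  haveI := hP; haveI := hQ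
  (Measure.pi fun _ : Fin m => P).prod (Measure.pi fun _ : Fin n => Q)

/-!
Le Cam's two-point method. Put `e = e₁`, `p = 1/2 + c/√m`, `q = 1/2 - c/√n`, and compare the null
`Ber(0, e, 1/2)^{⊗(m+n)}` with the alternative `Ber(0, e, p)^{⊗m} ⊗ Ber(0, e, q)^{⊗n}`.
Both sample laws are images of laws on the finite set `Bool^m × Bool^n`, where the null is
uniform; by Cauchy–Schwarz their total variation is at most the square root of the χ²-divergence,
`√((1 + 4c²/m)^m (1 + 4c²/n)^n - 1) ≤ √(e^{8c²} - 1)`, which is below `1 - α - ζ` for small `c`.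
So the level-`α` test accepts under the alternative with probability at least `ζ`.
On the other hand, for every direction `β` with `β₁ ≠ 0` (almost all of them) the projected
distribution functions differ by `p - q` at one of the two atoms `0`, `β₁` of the mixture, each of
mass at least `1/4`; hence `W² ≥ (p - q)²/4` and `W ≥ (c/2)(m^{-1/2} + n^{-1/2})`.
-/

section FiniteSpace

variable {Ω : Type*} [Fintype Ω]

theorem sum_abs_sub_inv_card_le_sqrt (p : Ω → ℝ) (hp : ∑ x, p x = 1) :
    ∑ x, |p x - (Fintype.card Ω : ℝ)⁻¹| ≤ √(Fintype.card Ω * ∑ x, p x ^ 2 - 1) := by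
  have hΩ : Nonempty Ω := by
    by_contra h
    simp [not_nonempty_iff.mp h] at hp
  have hcard : (Fintype.card Ω : ℝ) ≠ 0 := by positivity
  refine Real.le_sqrt_of_sq_le ?_
  calc (∑ x, |p x - (Fintype.card Ω : ℝ)⁻¹|) ^ 2
      ≤ Fintype.card Ω * ∑ x, (p x - (Fintype.card Ω : ℝ)⁻¹) ^ 2 := by
        simpa only [sq_abs, Finset.card_univ] using sq_sum_le_card_mul_sum_sq
          (s := Finset.univ) (f := fun x => |p x - (Fintype.card Ω : ℝ)⁻¹|)
    _ = Fintype.card Ω * ∑ x, p x ^ 2 - 1 := by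
        simp only [sub_sq, Finset.sum_add_distrib, Finset.sum_sub_distrib, ← Finset.sum_mul,
          ← Finset.mul_sum, hp, Finset.sum_const, Finset.card_univ, nsmul_eq_mul]
        field_simp
        ring

variable [MeasurableSpace Ω] [MeasurableSingletonClass Ω]

theorem measureReal_le_add_sum_abs (μ ν : Measure Ω) [IsFiniteMeasure μ] [IsFiniteMeasure ν]
    (B : Set Ω) : μ.real B ≤ ν.real B + ∑ x, |μ.real {x} - ν.real {x}| := by
  classical
  have hB : B = ↑(Finset.univ.filter (· ∈ B)) := by ext; simp
  rw [hB, ← sum_measureReal_singleton, ← sum_measureReal_singleton, ← sub_le_iff_le_add',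
    ← Finset.sum_sub_distrib]
  calc _ ≤ ∑ x ∈ Finset.univ.filter (· ∈ B), |μ.real {x} - ν.real {x}| :=
        Finset.sum_le_sum fun x _ => le_abs_self _
    _ ≤ _ := Finset.sum_le_sum_of_subset_of_nonneg (Finset.subset_univ _)
        fun _ _ _ => abs_nonneg _

theorem measureReal_le_add_sqrt_of_uniform {μ ν : Measure Ω} [IsFiniteMeasure μ]
    [IsProbabilityMeasure ν] (hμ : ∀ x, μ.real {x} = (Fintype.card Ω : ℝ)⁻¹) (B : Set Ω) :
    μ.real B ≤ ν.real B + √(Fintype.card Ω * ∑ x, ν.real {x} ^ 2 - 1) := by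
  have hν : ∑ x, ν.real {x} = 1 := by
    rw [sum_measureReal_singleton, Finset.coe_univ, probReal_univ]
  calc μ.real B ≤ ν.real B + ∑ x, |ν.real {x} - (Fintype.card Ω : ℝ)⁻¹| := by
        simpa only [hμ, abs_sub_comm] using measureReal_le_add_sum_abs μ ν B
    _ ≤ _ := by grw [sum_abs_sub_inv_card_le_sqrt _ hν]

end FiniteSpace

section Collision

variable {α β ι : Type*} [Fintype ι] [MeasurableSpace α] [MeasurableSpace β]

theorem measureReal_pi_singleton (μ : ι → Measure α) [∀ i, SigmaFinite (μ i)] (f : ι → α) :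
    (Measure.pi μ).real {f} = ∏ i, (μ i).real {f i} := by
  simp [measureReal_def, ENNReal.toReal_prod]

variable [Fintype α] [Fintype β]

theorem sum_measureReal_pi_singleton_sq [DecidableEq ι] (μ : Measure α) [SigmaFinite μ] :
    ∑ f : ι → α, (Measure.pi fun _ => μ).real {f} ^ 2 = (∑ a, μ.real {a} ^ 2) ^ Fintype.card ι := by
  simp_rw [measureReal_pi_singleton, ← Finset.prod_pow]
  rw [← Fintype.prod_sum (fun (_ : ι) a => μ.real {a} ^ 2), Finset.prod_const, Finset.card_univ]

theorem sum_measureReal_prod_singleton_sq (μ : Measure α) (ν : Measure β) [SFinite ν] :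
    ∑ z : α × β, (μ.prod ν).real {z} ^ 2 = (∑ a, μ.real {a} ^ 2) * ∑ b, ν.real {b} ^ 2 := by
  rw [Fintype.sum_prod_type, Finset.sum_mul_sum]
  simp [← Set.singleton_prod_singleton, measureReal_prod_prod, mul_pow]

end Collision

def unitInterval.half : unitInterval := ⟨1 / 2, by norm_num, by norm_num⟩

theorem sum_measureReal_bernoulli_bool_singleton_sq (p : unitInterval) :
    ∑ b, Ber(true, false, p).real {b} ^ 2 = (1 + (2 * p - 1) ^ 2) / 2 := by
  simp
  ring

theorem measureReal_bernoulli_bool_half_singleton (b : Bool) :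
    Ber(true, false, unitInterval.half).real {b} = 1 / 2 := by
  cases b <;> norm_num [unitInterval.half]

theorem one_add_pow_le_exp_mul {x : ℝ} (hx : 0 ≤ x) (m : ℕ) : (1 + x) ^ m ≤ exp (m * x) := by
  rw [exp_nat_mul]
  gcongr
  linarith [add_one_le_exp x]

theorem measureReal_pi_bernoulli_half_prod_le (m n : ℕ) (p q : unitInterval)
    (B : Set ((Fin m → Bool) × (Fin n → Bool))) :
    ((Measure.pi fun _ : Fin m => Ber(true, false, unitInterval.half)).prod
        (Measure.pi fun _ : Fin n => Ber(true, false, unitInterval.half))).real B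
      ≤ ((Measure.pi fun _ : Fin m => Ber(true, false, p)).prod
          (Measure.pi fun _ : Fin n => Ber(true, false, q))).real B
        + √(exp (m * (2 * p - 1) ^ 2 + n * (2 * q - 1) ^ 2) - 1) := by
  set μ₀ := (Measure.pi fun _ : Fin m => Ber(true, false, unitInterval.half)).prod
    (Measure.pi fun _ : Fin n => Ber(true, false, unitInterval.half))
  set ν := (Measure.pi fun _ : Fin m => Ber(true, false, p)).prod
    (Measure.pi fun _ : Fin n => Ber(true, false, q))
  refine (measureReal_le_add_sqrt_of_uniform (μ := μ₀) (ν := ν) (fun z => ?_) B).trans ?_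
  · obtain ⟨s, t⟩ := z
    simp [μ₀, ← Set.singleton_prod_singleton, measureReal_prod_prod, measureReal_pi_singleton,
      measureReal_bernoulli_bool_half_singleton, mul_comm]
  · gcongr
    rw [sum_measureReal_prod_singleton_sq, sum_measureReal_pi_singleton_sq,
      sum_measureReal_pi_singleton_sq, sum_measureReal_bernoulli_bool_singleton_sq,
      sum_measureReal_bernoulli_bool_singleton_sq, exp_add]
    calc (Fintype.card ((Fin m → Bool) × (Fin n → Bool)) : ℝ)
          * (((1 + (2 * p - 1) ^ 2) / 2) ^ Fintype.card (Fin m)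
            * ((1 + (2 * q - 1) ^ 2) / 2) ^ Fintype.card (Fin n))
        = (1 + (2 * p - 1) ^ 2) ^ m * (1 + (2 * q - 1) ^ 2) ^ n := by
          simp [div_pow]
          field_simp
      _ ≤ _ := by gcongr <;> exact one_add_pow_le_exp_mul (sq_nonneg _) _

instance isProbabilityMeasure_sampleLaw {d m n : ℕ} (P Q : Measure (EuclideanSpace ℝ (Fin d)))
    (hP : IsProbabilityMeasure P) (hQ : IsProbabilityMeasure Q) :
    IsProbabilityMeasure (sampleLaw m n P Q hP hQ) := by
  unfold sampleLaw
  infer_instance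

theorem measurePreserving_sampleLaw_bernoulli {d : ℕ} (m n : ℕ) (x y : EuclideanSpace ℝ (Fin d))
    (p q : unitInterval) :
    MeasurePreserving
      (Prod.map (fun (s : Fin m → Bool) i => cond (s i) x y)
        (fun (s : Fin n → Bool) i => cond (s i) x y))
      ((Measure.pi fun _ : Fin m => Ber(true, false, p)).prod
        (Measure.pi fun _ : Fin n => Ber(true, false, q)))
      (sampleLaw m n Ber(x, y, p) Ber(x, y, q) inferInstance inferInstance) := by
  have hcond (r : unitInterval) : MeasurePreserving (cond · x y) Ber(true, false, r) Ber(x, y, r) :=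
    ⟨measurable_from_top, map_bernoulliMeasure' _ _ measurable_from_top r⟩
  exact (measurePreserving_pi _ _ fun _ => hcond p).prod (measurePreserving_pi _ _ fun _ => hcond q)

theorem measureReal_sampleLaw_bernoulli_half_le {d m n : ℕ} (x y : EuclideanSpace ℝ (Fin d))
    (p q : unitInterval)
    {A : Set ((Fin m → EuclideanSpace ℝ (Fin d)) × (Fin n → EuclideanSpace ℝ (Fin d)))}
    (hA : MeasurableSet A) :
    (sampleLaw m n Ber(x, y, unitInterval.half) Ber(x, y, unitInterval.half)
        inferInstance inferInstance).real A
      ≤ (sampleLaw m n Ber(x, y, p) Ber(x, y, q) inferInstance inferInstance).real A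
        + √(exp (m * (2 * p - 1) ^ 2 + n * (2 * q - 1) ^ 2) - 1) := by
  simp only [measureReal_def, ← (measurePreserving_sampleLaw_bernoulli m n x y _ _).measure_preimage
    hA.nullMeasurableSet]
  exact measureReal_pi_bernoulli_half_prod_le m n p q _

theorem le_measureReal_sampleLaw_bernoulli_compl {d m n : ℕ} (x y : EuclideanSpace ℝ (Fin d))
    (p q : unitInterval)
    {A : Set ((Fin m → EuclideanSpace ℝ (Fin d)) × (Fin n → EuclideanSpace ℝ (Fin d)))}
    (hA : MeasurableSet A) {α : ℝ} (hα : 0 ≤ α)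
    (hlevel : sampleLaw m n Ber(x, y, unitInterval.half) Ber(x, y, unitInterval.half)
      inferInstance inferInstance A ≤ ENNReal.ofReal α) :
    1 - α - √(exp (m * (2 * p - 1) ^ 2 + n * (2 * q - 1) ^ 2) - 1)
      ≤ (sampleLaw m n Ber(x, y, p) Ber(x, y, q) inferInstance inferInstance).real Aᶜ := by
  have hnull := measureReal_sampleLaw_bernoulli_half_le x y p q hA.compl
  rw [measureReal_compl hA, probReal_univ] at hnull
  have := ENNReal.toReal_le_of_le_ofReal hα hlevel
  rw [← measureReal_def] at this
  linarith

instance isProbabilityMeasure_stdGaussian (d : ℕ) : IsProbabilityMeasure (_root_.stdGaussian d) :=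
  Measure.isProbabilityMeasure_map
    (EuclideanSpace.equiv (Fin d) ℝ).symm.continuous.measurable.aemeasurable

theorem measurable_inv_norm_smul (d : ℕ) :
    Measurable fun x : EuclideanSpace ℝ (Fin d) => ‖x‖⁻¹ • x :=
  measurable_norm.inv.smul measurable_id

instance isProbabilityMeasure_sphereUniform (d : ℕ) : IsProbabilityMeasure (sphereUniform d) :=
  Measure.isProbabilityMeasure_map (measurable_inv_norm_smul d).aemeasurable

theorem sphereUniform_coord_eq_zero {d : ℕ} (i : Fin d) :
    sphereUniform d {β | β i = 0} = 0 := by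
  have hcoord : Measurable fun x : EuclideanSpace ℝ (Fin d) => x i :=
    (EuclideanSpace.proj i).continuous.measurable
  have hS : MeasurableSet {x : EuclideanSpace ℝ (Fin d) | x i = 0} :=
    hcoord (measurableSet_singleton 0)
  have hpre : (fun x : EuclideanSpace ℝ (Fin d) => ‖x‖⁻¹ • x) ⁻¹' {β | β i = 0}
      ⊆ {x | x i = 0} := by
    intro x hx
    rcases mul_eq_zero.mp (show ‖x‖⁻¹ * x i = 0 from hx) with h | h
    · simp [norm_eq_zero.mp (inv_eq_zero.mp h)]
    · exact h
  rw [sphereUniform, Measure.map_apply (measurable_inv_norm_smul d) hS]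
  refine measure_mono_null hpre ?_
  rw [_root_.stdGaussian, Measure.map_apply
    (EuclideanSpace.equiv (Fin d) ℝ).symm.continuous.measurable hS]
  have := nullSingletonClass_gaussianReal (μ := 0) one_ne_zero
  exact Measure.pi_eval_preimage_null _ (s := {0}) (measure_singleton 0)

theorem projCDF_bernoulli {d : ℕ} (x y β : EuclideanSpace ℝ (Fin d)) (p : unitInterval) (t : ℝ) :
    projCDF Ber(x, y, p) β t =
      if ⟪β, x⟫ ≤ t then (if ⟪β, y⟫ ≤ t then 1 else (p : ℝ))
      else (if ⟪β, y⟫ ≤ t then 1 - (p : ℝ) else 0) := by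
  classical
  have hs : MeasurableSet {z : EuclideanSpace ℝ (Fin d) | ⟪β, z⟫ ≤ t} :=
    measurableSet_le (measurable_const.inner measurable_id) measurable_const
  rw [projCDF, ← measureReal_def, bernoulliMeasure_real_apply p hs]
  simp

theorem integral_projLaw_mixture_bernoulli {d : ℕ} (x y β : EuclideanSpace ℝ (Fin d))
    (p q : unitInterval) {θ : ℝ} (hθ : θ ∈ Set.Icc (0 : ℝ) 1) (f : ℝ → ℝ) :
    ∫ t, f t ∂projLaw (ENNReal.ofReal θ • Ber(x, y, p) + ENNReal.ofReal (1 - θ) • Ber(x, y, q)) β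
      = θ * (p * f ⟪β, x⟫ + (1 - p) * f ⟪β, y⟫)
        + (1 - θ) * (q * f ⟪β, x⟫ + (1 - q) * f ⟪β, y⟫) := by
  have hβ : Measurable fun z : EuclideanSpace ℝ (Fin d) => ⟪β, z⟫ :=
    measurable_const.inner measurable_id
  rw [projLaw, Measure.map_add _ _ hβ, Measure.map_smul, Measure.map_smul,
    map_bernoulliMeasure' _ _ hβ, map_bernoulliMeasure' _ _ hβ,
    integral_add_measure
      ((integrable_bernoulliMeasure _ _ _ f).smul_measure ENNReal.ofReal_ne_top)
      ((integrable_bernoulliMeasure _ _ _ f).smul_measure ENNReal.ofReal_ne_top),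
    integral_smul_measure, integral_smul_measure, integral_bernoulliMeasure,
    integral_bernoulliMeasure, ENNReal.toReal_ofReal hθ.1,
    ENNReal.toReal_ofReal (sub_nonneg.2 hθ.2)]
  simp only [smul_eq_mul]

theorem integral_sq_projCDF_sub_bernoulli {d : ℕ} (i : Fin d) (p q : unitInterval) {θ : ℝ}
    (hθ : θ ∈ Set.Icc (0 : ℝ) 1) (β : EuclideanSpace ℝ (Fin d)) :
    ∫ t, (projCDF Ber(0, EuclideanSpace.single i 1, p) β t
        - projCDF Ber(0, EuclideanSpace.single i 1, q) β t) ^ 2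
      ∂projLaw (ENNReal.ofReal θ • Ber(0, EuclideanSpace.single i 1, p)
        + ENNReal.ofReal (1 - θ) • Ber(0, EuclideanSpace.single i 1, q)) β
      = (p - q) ^ 2 * ((θ * p + (1 - θ) * q) * (if 0 < β i then 1 else 0)
          + (1 - (θ * p + (1 - θ) * q)) * (if β i < 0 then 1 else 0)) := by
  rw [integral_projLaw_mixture_bernoulli _ _ _ p q hθ]
  simp only [projCDF_bernoulli, inner_zero_right, EuclideanSpace.inner_single_right, one_mul,
    conj_trivial]
  rcases lt_trichotomy (β i) 0 with h | h | h
  · simp [h, h.le, h.not_ge, h.not_gt]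
    ring
  · simp [h]
  · simp [h, h.le, h.not_ge, h.not_gt]
    ring

theorem le_cvmSq_bernoulli {d : ℕ} (i : Fin d) (p q : unitInterval) {θ : ℝ}
    (hθ : θ ∈ Set.Icc (0 : ℝ) 1) :
    (p - q) ^ 2 * min (θ * p + (1 - θ) * q) (1 - (θ * p + (1 - θ) * q))
      ≤ cvmSq θ Ber(0, EuclideanSpace.single i 1, p) Ber(0, EuclideanSpace.single i 1, q) := by
  set r := θ * p + (1 - θ) * q
  have hcoord : Measurable fun β : EuclideanSpace ℝ (Fin d) => β i :=
    (EuclideanSpace.proj i).continuous.measurable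
  have hG : Measurable fun β : EuclideanSpace ℝ (Fin d) =>
      (p - q) ^ 2 * (r * (if 0 < β i then 1 else 0) + (1 - r) * (if β i < 0 then 1 else 0)) :=
    measurable_const.mul
      ((measurable_const.mul (Measurable.ite (measurableSet_lt measurable_const hcoord)
        measurable_const measurable_const)).add
      (measurable_const.mul (Measurable.ite (measurableSet_lt hcoord measurable_const)
        measurable_const measurable_const)))
  have hG_int := Integrable.of_bound (μ := sphereUniform d) hG.aestronglyMeasurable
    ((p - q) ^ 2 * (|r| + |1 - r|)) (Filter.Eventually.of_forall fun β => by
      rw [norm_mul, Real.norm_of_nonneg (sq_nonneg _)]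
      gcongr
      split_ifs <;> simp <;> linarith [le_abs_self r, le_abs_self (1 - r), abs_nonneg r])
  have hae : ∀ᵐ β ∂sphereUniform d, β i ≠ 0 :=
    ae_iff.mpr (by simpa using sphereUniform_coord_eq_zero i)
  rw [cvmSq]
  simp_rw [integral_sq_projCDF_sub_bernoulli i p q hθ]
  calc (p - q) ^ 2 * min r (1 - r) = ∫ _, (p - q) ^ 2 * min r (1 - r) ∂sphereUniform d := by simp
    _ ≤ _ := integral_mono_ae (integrable_const _) hG_int (hae.mono fun β hβ => by
      rcases hβ.lt_or_gt with h | h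
      · simp [h, h.not_gt]
        gcongr
        exact min_le_right _ _
      · simp [h, h.not_gt]
        gcongr
        exact min_le_left _ _)

theorem le_sqrt_cvmSq_bernoulli {d : ℕ} (i : Fin d) {p q : unitInterval}
    (hp : (p : ℝ) ∈ Set.Icc (1 / 4 : ℝ) (3 / 4)) (hq : (q : ℝ) ∈ Set.Icc (1 / 4 : ℝ) (3 / 4))
    {θ : ℝ} (hθ : θ ∈ Set.Icc (0 : ℝ) 1) :
    |(p : ℝ) - q| / 2
      ≤ √(cvmSq θ Ber(0, EuclideanSpace.single i 1, p) Ber(0, EuclideanSpace.single i 1, q)) := by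
  obtain ⟨hθ0, hθ1⟩ := hθ
  have hr : 1 / 4 ≤ min (θ * p + (1 - θ) * q) (1 - (θ * p + (1 - θ) * q)) := by
    refine le_min ?_ ?_ <;>
      nlinarith [mul_le_mul_of_nonneg_left hp.1 hθ0, mul_le_mul_of_nonneg_left hp.2 hθ0,
        mul_le_mul_of_nonneg_left hq.1 (sub_nonneg.2 hθ1),
        mul_le_mul_of_nonneg_left hq.2 (sub_nonneg.2 hθ1)]
  refine Real.le_sqrt_of_sq_le (le_trans ?_ (le_cvmSq_bernoulli i p q ⟨hθ0, hθ1⟩))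
  rw [div_pow, sq_abs]
  nlinarith [sq_nonneg ((p : ℝ) - q)]

theorem exists_pos_le_quarter_sqrt_exp_sub_one_le {δ : ℝ} (hδ : 0 < δ) :
    ∃ c : ℝ, 0 < c ∧ c ≤ 1 / 4 ∧ √(exp (8 * c ^ 2) - 1) ≤ δ := by
  have hL : 0 < log (1 + δ ^ 2) := log_pos (by nlinarith)
  refine ⟨min (1 / 4) √(log (1 + δ ^ 2) / 8), lt_min (by norm_num) (by positivity),
    min_le_left _ _, ?_⟩
  have h8 : 8 * min (1 / 4) √(log (1 + δ ^ 2) / 8) ^ 2 ≤ log (1 + δ ^ 2) := by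
    have := pow_le_pow_left₀ (by positivity) (min_le_right (1 / 4 : ℝ) √(log (1 + δ ^ 2) / 8)) 2
    rw [sq_sqrt (by positivity)] at this
    linarith
  rw [Real.sqrt_le_left hδ.le, sub_le_iff_le_add']
  calc exp _ ≤ exp (log (1 + δ ^ 2)) := exp_le_exp.2 h8
    _ = 1 + δ ^ 2 := exp_log (by positivity)

/-- Minimax lower bound, Theorem 4.1: for every `α ∈ (0,1)` and
`ζ ∈ (0, 1-α)` there is `b = b(α,ζ) > 0` such that for all `d ≥ 1`, `m, n ≥ 2`, every weight
`ϑ ∈ (0,1)`, and every Borel rejection region `A` of level `α` (i.e. `(P^{⊗m}⊗P^{⊗n})(A) ≤ α`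
for all Borel probability measures `P`), there are Borel probability measures `P_X, P_Y` with
`W_d(P_X,P_Y) ≥ b (m^{-1/2}+n^{-1/2})` whose type II error satisfies
`(P_X^{⊗m} ⊗ P_Y^{⊗n})(Aᶜ) ≥ ζ`. -/
theorem stmt7 (α ζ : ℝ) (hα : α ∈ Set.Ioo (0 : ℝ) 1) (hζ : ζ ∈ Set.Ioo (0 : ℝ) (1 - α)) :
    ∃ b : ℝ, 0 < b ∧
      ∀ (d m n : ℕ), 1 ≤ d → 2 ≤ m → 2 ≤ n → ∀ ϑ : ℝ, ϑ ∈ Set.Ioo (0 : ℝ) 1 →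
        ∀ A : Set ((Fin m → EuclideanSpace ℝ (Fin d)) × (Fin n → EuclideanSpace ℝ (Fin d))),
          MeasurableSet A →
          (∀ (P : Measure (EuclideanSpace ℝ (Fin d))) (hP : IsProbabilityMeasure P),
            sampleLaw m n P P hP hP A ≤ ENNReal.ofReal α) →
          ∃ (PX PY : Measure (EuclideanSpace ℝ (Fin d)))
            (hPX : IsProbabilityMeasure PX) (hPY : IsProbabilityMeasure PY),
            b * (1 / Real.sqrt m + 1 / Real.sqrt n) ≤ Real.sqrt (cvmSq ϑ PX PY) ∧
            ENNReal.ofReal ζ ≤ sampleLaw m n PX PY hPX hPY Aᶜ := by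
  obtain ⟨c, hc, hc4, hcδ⟩ := exists_pos_le_quarter_sqrt_exp_sub_one_le (sub_pos.2 hζ.2)
  refine ⟨c / 2, by positivity, fun d m n hd hm hn ϑ hϑ A hA hlevel => ?_⟩
  have hsm : (1 : ℝ) ≤ √m := one_le_sqrt.2 (by norm_cast; omega)
  have hsn : (1 : ℝ) ≤ √n := one_le_sqrt.2 (by norm_cast; omega)
  have ha : c / √m ∈ Set.Icc (0 : ℝ) (1 / 4) := ⟨by positivity, (div_le_self hc.le hsm).trans hc4⟩
  have ha' : c / √n ∈ Set.Icc (0 : ℝ) (1 / 4) := ⟨by positivity, (div_le_self hc.le hsn).trans hc4⟩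
  let p : unitInterval := ⟨1 / 2 + c / √m, by linarith [ha.1], by linarith [ha.2]⟩
  let q : unitInterval := ⟨1 / 2 - c / √n, by linarith [ha'.2], by linarith [ha'.1]⟩
  have hp : (p : ℝ) = 1 / 2 + c / √m := rfl
  have hq : (q : ℝ) = 1 / 2 - c / √n := rfl
  set e := EuclideanSpace.single (⟨0, hd⟩ : Fin d) (1 : ℝ)
  refine ⟨Ber(0, e, p), Ber(0, e, q), inferInstance, inferInstance, ?_, ?_⟩
  · calc c / 2 * (1 / √m + 1 / √n) = |(p : ℝ) - q| / 2 := by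
          rw [hp, hq, abs_of_nonneg (by linarith [ha.1, ha'.1])]
          ring
      _ ≤ _ := le_sqrt_cvmSq_bernoulli _
          ⟨by linarith [ha.1], by linarith [ha.2]⟩ ⟨by linarith [ha'.2], by linarith [ha'.1]⟩
          ⟨hϑ.1.le, hϑ.2.le⟩
  · have hexp : (m : ℝ) * (2 * p - 1) ^ 2 + n * (2 * q - 1) ^ 2 = 8 * c ^ 2 := by
      rw [hp, hq]
      field_simp
      rw [sq_sqrt (by positivity), sq_sqrt (by positivity)]
      ring
    have := le_measureReal_sampleLaw_bernoulli_compl 0 e p q hA hα.1.le (hlevel _ _)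
    rw [hexp] at this
    exact ENNReal.ofReal_le_of_le_toReal (by rw [← measureReal_def]; linarith)
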